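/- arXiv:1202.3406 — 2 statements merged into one kernel-verified Lean document; each statement's English description precedes it below -/
import Mathlib

section
/- If M is a matroid whose ground set E is not a base, then the collection {B ∪ {e} : B a base of M, e ∈ E \ B} is the set of bases of a matroid M⁺ on E, and (M⁺)* = (M*)⁻. -/
/-!
Since `(M⁺)✶ = (M✶)⁻`, it suffices to construct the truncation `N⁻` of `N = M✶` (defined because
`∅` is not a base of `M✶`) and take `M⁺ := (N⁻)✶`. The independent sets of `N⁻` are the
`N`-independent sets that are not bases. Its maximal independent sets are the bases of `N` with one
element removed: if `I` is independent and `insert e I` is a base, then `insert f I` is a base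
whenever it is independent, by basis exchange.
-/

open Set

namespace Matroid

variable {α : Type*} {N : Matroid α} {I J X : Set α}

def TruncIndep (N : Matroid α) (I : Set α) : Prop := N.Indep I ∧ ¬ N.IsBase I

lemma TruncIndep.subset (hJ : N.TruncIndep J) (hIJ : I ⊆ J) : N.TruncIndep I :=
  ⟨hJ.1.subset hIJ, fun hI ↦ hJ.2 (by rwa [← hI.eq_of_subset_indep hJ.1 hIJ])⟩

lemma maximal_truncIndep_iff : Maximal N.TruncIndep I ↔ ∃ e ∉ I, N.IsBase (insert e I) := by
  rw [maximal_iff_forall_insert fun _ _ ↦ TruncIndep.subset]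
  constructor
  · rintro ⟨⟨hI, hIb⟩, hmax⟩
    obtain ⟨B, hB⟩ := N.exists_isBase
    obtain ⟨e, he, heI⟩ := hI.exists_insert_of_not_isBase hIb hB
    exact ⟨e, he.2, not_not.1 fun h ↦ hmax e he.2 ⟨heI, h⟩⟩
  · rintro ⟨e, heI, he⟩
    refine ⟨⟨he.indep.subset (subset_insert e I), fun hI ↦ heI ?_⟩, fun f hfI hf ↦ hf.2 ?_⟩
    · rw [hI.eq_of_subset_indep he.indep (subset_insert e I)]
      exact mem_insert e I
    · exact insert_isBase_of_insert_indep heI hfI he hf.1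

lemma TruncIndep.exists_insert_of_not_maximal (hI : N.TruncIndep I)
    (hImax : ¬ Maximal N.TruncIndep I) (hJ : Maximal N.TruncIndep J) :
    ∃ x ∈ J \ I, N.TruncIndep (insert x I) := by
  rw [maximal_truncIndep_iff] at hImax hJ
  push Not at hImax
  obtain ⟨e, heJ, hB⟩ := hJ
  suffices ∃ x ∈ insert e J \ I, x ≠ e ∧ N.Indep (insert x I) by
    obtain ⟨x, hx, hxe, hxI⟩ := this
    exact ⟨x, ⟨hx.1.resolve_left hxe, hx.2⟩, hxI, hImax x hx.2⟩
  obtain ⟨x, hx, hxI⟩ := hI.1.exists_insert_of_not_isBase hI.2 hB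
  obtain rfl | hxe := eq_or_ne x e
  · -- `insert x I` is not a base either, so the base `insert x J` augments it once more.
    obtain ⟨y, hy, hyI⟩ := hxI.exists_insert_of_not_isBase (hImax x hx.2) hB
    exact ⟨y, ⟨hy.1, fun h ↦ hy.2 (Or.inr h)⟩, fun h ↦ hy.2 (Or.inl h),
      hyI.subset (insert_subset_insert (subset_insert x I))⟩
  · exact ⟨x, hx, hxe, hxI⟩

lemma existsMaximalSubsetProperty_truncIndep (X : Set α) :
    ExistsMaximalSubsetProperty N.TruncIndep X := by
  intro I hI hIX
  obtain ⟨J, hJ, hIJ⟩ := hI.1.subset_isBasis'_of_subset hIX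
  by_cases hJb : N.IsBase J
  · obtain ⟨e, heJ, heI⟩ := exists_of_ssubset (hIJ.ssubset_of_ne fun h ↦ hI.2 (h ▸ hJb))
    have hmax : Maximal N.TruncIndep (J \ {e}) := maximal_truncIndep_iff.2
      ⟨e, fun h ↦ h.2 rfl, by rwa [insert_sdiff_singleton, insert_eq_of_mem heJ]⟩
    exact ⟨J \ {e}, subset_sdiff_singleton hIJ heI, hmax.and_right (sdiff_subset.trans hJ.subset)⟩
  · exact ⟨J, hIJ, ⟨⟨hJ.indep, hJb⟩, hJ.subset⟩,
      fun K hK hJK ↦ (hJ.eq_of_subset_indep hK.1.1 hJK hK.2).symm.subset⟩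

def truncate (N : Matroid α) (hN : ¬ N.IsBase ∅) : Matroid α :=
  IndepMatroid.matroid
    { E := N.E
      Indep := N.TruncIndep
      indep_empty := ⟨N.empty_indep, hN⟩
      indep_subset := fun _ _ ↦ TruncIndep.subset
      indep_aug := fun _ _ ↦ TruncIndep.exists_insert_of_not_maximal
      indep_maximal := fun X _ ↦ existsMaximalSubsetProperty_truncIndep X
      subset_ground := fun _ hI ↦ hI.1.subset_ground }

lemma truncate_ground (hN : ¬ N.IsBase ∅) : (N.truncate hN).E = N.E := rfl

lemma truncate_isBase_iff (hN : ¬ N.IsBase ∅) :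
    (N.truncate hN).IsBase X ↔ ∃ B e, N.IsBase B ∧ e ∈ B ∧ X = B \ {e} := by
  change Maximal N.TruncIndep X ↔ _
  rw [maximal_truncIndep_iff]
  constructor
  · rintro ⟨e, heX, hB⟩
    exact ⟨insert e X, e, hB, mem_insert e X, (insert_sdiff_self_of_notMem heX).symm⟩
  · rintro ⟨B, e, hB, heB, rfl⟩
    exact ⟨e, fun h ↦ h.2 rfl, by rwa [insert_sdiff_singleton, insert_eq_of_mem heB]⟩

lemma truncate_dual_isBase_iff (hN : ¬ N.IsBase ∅) :
    (N.truncate hN)✶.IsBase X ↔ ∃ B e, N✶.IsBase B ∧ e ∈ N.E \ B ∧ X = insert e B := by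
  rw [dual_isBase_iff', truncate_isBase_iff, truncate_ground]
  constructor
  · rintro ⟨⟨B, e, hB, heB, hX⟩, hXE⟩
    have heE : e ∈ N.E := hB.subset_ground heB
    refine ⟨N.E \ B, e, hB.compl_isBase_dual, ⟨heE, fun h ↦ h.2 heB⟩, ?_⟩
    rw [← sdiff_sdiff_cancel_left hXE, hX]
    ext x
    obtain rfl | hxe := eq_or_ne x e <;> simp [*]
  · rintro ⟨B, e, hB, he, rfl⟩
    refine ⟨⟨N.E \ B, e, hB.compl_isBase_of_dual, he, ?_⟩,
      insert_subset he.1 hB.subset_ground⟩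
    rw [sdiff_sdiff, union_singleton]

end Matroid

open Matroid

/-- If the ground set `E` of `M` is not a base, then the sets `B ∪ {e}` for `B` a base of `M` and
`e ∈ E \ B` form the bases of a matroid `M⁺`, and `(M⁺)✶ = (M✶)⁻`, i.e. the bases of the dual of
`M⁺` are exactly the sets obtained from bases of `M✶` by removing one element. -/
theorem Mplus_isMatroid_and_dual {α : Type*} (M : Matroid α) (h : ¬ M.IsBase M.E) :
    ∃ Mp : Matroid α, Mp.E = M.E ∧
      (∀ X, Mp.IsBase X ↔ ∃ B e, M.IsBase B ∧ e ∈ M.E \ B ∧ X = insert e B) ∧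
      (∀ X, Mp✶.IsBase X ↔ ∃ B e, M✶.IsBase B ∧ e ∈ B ∧ X = B \ {e}) := by
  have hM : ¬ M✶.IsBase ∅ := by rwa [dual_isBase_iff, sdiff_empty]
  refine ⟨(M✶.truncate hM)✶, rfl, fun X ↦ ?_, fun X ↦ ?_⟩
  · simpa only [dual_dual, dual_ground] using truncate_dual_isBase_iff hM
  · rw [dual_dual, truncate_isBase_iff]
end

section
/- Let M be a matroid whose ground set is not a base, let O be a circuit of M, and let I ⊆ E(M) \ O. Then O ∪ I is independent in M⁺ if and only if I is independent in the contraction M/O. -/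
/-- A circuit: a minimal dependent set. -/
def Matroid.IsCircuit' {α : Type*} (M : Matroid α) (C : Set α) : Prop :=
  M.Dep C ∧ ∀ ⦃D⦄, M.Dep D → D ⊆ C → D = C

/-! A base `B + e` of `M⁺` can contain the circuit `O` only if `e ∈ O`, so `O ∪ I ⊆ B + e` says
that `(O ∪ I) - e` is independent in `M`; conversely, if `(O ∪ I) - e` is independent for some
`e ∈ O`, it extends to a base `B` of `M`, which cannot contain `e` since `O ⊆ B + e`. On the
contraction side, the bases of the circuit `O` are exactly the sets `O - e` with `e ∈ O`. -/

namespace Matroid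

variable {α : Type*} {M : Matroid α} {B C I X : Set α} {e : α}

lemma isCircuit'_iff_isCircuit : M.IsCircuit' C ↔ M.IsCircuit C :=
  isCircuit_iff.symm

lemma IsCircuit.mem_of_subset_insert_of_isBase (hC : M.IsCircuit C) (hB : M.IsBase B)
    (hCB : C ⊆ insert e B) : e ∈ C := by
  by_contra heC
  exact hC.not_indep (hB.indep.subset ((Set.subset_insert_iff_of_notMem heC).1 hCB))

lemma IsCircuit.exists_isBase_subset_insert_iff (hC : M.IsCircuit C) (hCX : C ⊆ X) :
    (∃ B e, M.IsBase B ∧ e ∈ M.E \ B ∧ X ⊆ insert e B) ↔ ∃ e ∈ C, M.Indep (X \ {e}) := by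
  constructor
  · rintro ⟨B, e, hB, -, hXB⟩
    exact ⟨e, hC.mem_of_subset_insert_of_isBase hB (hCX.trans hXB),
      hB.indep.subset (Set.sdiff_singleton_subset_iff.2 hXB)⟩
  · rintro ⟨e, heC, hXe⟩
    obtain ⟨B, hB, hXeB⟩ := hXe.exists_isBase_superset
    have hXB : X ⊆ insert e B := Set.sdiff_singleton_subset_iff.1 hXeB
    have heB : e ∉ B := fun heB ↦
      hC.not_indep (hB.indep.subset (hCX.trans (Set.insert_eq_of_mem heB ▸ hXB)))
    exact ⟨B, e, hB, ⟨hC.subset_ground heC, heB⟩, hXB⟩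

lemma IsCircuit.exists_isBasis_indep_union_iff (hC : M.IsCircuit C) (hIC : Disjoint I C) :
    (∃ J, M.IsBasis J C ∧ M.Indep (I ∪ J)) ↔ ∃ e ∈ C, M.Indep ((C ∪ I) \ {e}) := by
  have hdiff : ∀ e ∈ C, (C ∪ I) \ {e} = I ∪ C \ {e} := fun e heC ↦ by
    rw [Set.union_comm, Set.union_sdiff_distrib,
      Set.sdiff_singleton_eq_self (hIC.notMem_of_mem_right heC)]
  simp_rw [hC.isBasis_iff_eq_sdiff_singleton]
  constructor
  · rintro ⟨-, ⟨e, heC, rfl⟩, hind⟩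
    exact ⟨e, heC, hdiff e heC ▸ hind⟩
  · rintro ⟨e, heC, hind⟩
    exact ⟨C \ {e}, ⟨e, heC, rfl⟩, hdiff e heC ▸ hind⟩

end Matroid

theorem Mplus_indep_union_circuit_iff_general {α : Type*} (M Mp MC : Matroid α)
    (hB : ∀ X, Mp.IsBase X ↔ ∃ B e, M.IsBase B ∧ e ∈ M.E \ B ∧ X = insert e B)
    (O : Set α) (hO : M.IsCircuit' O)
    (hCI : ∀ I, MC.Indep I ↔ Disjoint I O ∧ ∃ J, M.IsBasis J O ∧ M.Indep (I ∪ J))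
    (I : Set α) (hI : I ⊆ M.E \ O) :
    Mp.Indep (O ∪ I) ↔ MC.Indep I := by
  have hOC : M.IsCircuit O := Matroid.isCircuit'_iff_isCircuit.1 hO
  have hIO : Disjoint I O := Set.disjoint_left.2 fun x hx ↦ (hI hx).2
  rw [hCI, and_iff_right hIO, hOC.exists_isBasis_indep_union_iff hIO,
    ← hOC.exists_isBase_subset_insert_iff Set.subset_union_left,
    Matroid.indep_iff]
  simp only [hB]
  constructor
  · rintro ⟨-, ⟨B, e, hBase, he, rfl⟩, hOI⟩
    exact ⟨B, e, hBase, he, hOI⟩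
  · rintro ⟨B, e, hBase, he, hOI⟩
    exact ⟨_, ⟨B, e, hBase, he, rfl⟩, hOI⟩

/-- Let `Mp = M⁺` (bases `B + e` with `B` a base of `M`, `e ∉ B`; the ground set is not a base),
let `O` be a circuit of `M`, let `MC = M/O` be the contraction of `M` by `O`, and let
`I ⊆ E(M) \ O`. Then `O ∪ I` is independent in `M⁺` iff `I` is independent in `M/O`. -/
theorem Mplus_indep_union_circuit_iff {α : Type*} (M Mp MC : Matroid α)
    (hEb : ¬ M.IsBase M.E) (hE : Mp.E = M.E)
    (hB : ∀ X, Mp.IsBase X ↔ ∃ B e, M.IsBase B ∧ e ∈ M.E \ B ∧ X = insert e B)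
    (O : Set α) (hO : M.IsCircuit' O)
    (hCE : MC.E = M.E \ O)
    (hCI : ∀ I, MC.Indep I ↔ Disjoint I O ∧ ∃ J, M.IsBasis J O ∧ M.Indep (I ∪ J))
    (I : Set α) (hI : I ⊆ M.E \ O) :
    Mp.Indep (O ∪ I) ↔ MC.Indep I :=
  Mplus_indep_union_circuit_iff_general M Mp MC hB O hO hCI I hI
end
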